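/- arXiv:1602.05866 — 3 statements merged into one kernel-verified Lean document; each statement's English description precedes it below -/
import Mathlib

section
/- Let V be a finite set of vectors in ℝ^ℓ and let w(s) = (1/s)·ln Σ_{v∈V} exp(s²‖v‖²/(2ℓ²)) for s > 0, where ‖·‖ is the Euclidean norm. Then w is a convex, continuous function on (0,∞). -/
/-!
For weights `a v` let `Z t = ∑ v, exp (t * a v)` and let `A` be the mean of `a` under the Gibbs
weights `exp (t₀ * a v) / Z t₀`. Jensen's inequality for `exp` gives the tangent bound
`log Z t ≥ log Z t₀ + (t - t₀) * A`, and `H = log Z t₀ - t₀ * A` (the entropy of the Gibbs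
weights) is nonnegative. With `t = s ^ 2` this says `s⁻¹ * log Z (s ^ 2) ≥ A * s + H / s`, with
equality at `s = s₀`. So `w` is a pointwise maximum of convex functions `A * s + H / s`, hence
convex, and continuous because `(0, ∞)` is open.
-/

open Real Set Finset

theorem ConvexOn.of_forall_exists_le_eq {𝕜 E β : Type*} [Semiring 𝕜] [PartialOrder 𝕜]
    [AddCommMonoid E] [AddCommMonoid β] [PartialOrder β] [IsOrderedAddMonoid β]
    [SMul 𝕜 E] [SMul 𝕜 β] [PosSMulMono 𝕜 β] {s : Set E} {f : E → β} (hs : Convex 𝕜 s)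
    (h : ∀ x ∈ s, ∃ g : E → β, ConvexOn 𝕜 s g ∧ (∀ y ∈ s, g y ≤ f y) ∧ g x = f x) :
    ConvexOn 𝕜 s f := by
  refine ⟨hs, fun x hx y hy a b ha hb hab => ?_⟩
  obtain ⟨g, hg, hgf, hg_eq⟩ := h _ (hs hx hy ha hb hab)
  calc f (a • x + b • y) = g (a • x + b • y) := hg_eq.symm
    _ ≤ a • g x + b • g y := hg.2 hx hy ha hb hab
    _ ≤ a • f x + b • f y := by gcongr <;> exact hgf _ ‹_›

theorem convexOn_inv_mul_sq_mul_add (A : ℝ) {H : ℝ} (hH : 0 ≤ H) :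
    ConvexOn ℝ (Ioi 0) fun s : ℝ => s⁻¹ * (s ^ 2 * A + H) := by
  refine (((LinearMap.mul ℝ ℝ A).convexOn (convex_Ioi 0)).add
    ((convexOn_zpow (-1)).smul hH)).congr fun s (hs : 0 < s) => ?_
  simp only [Pi.add_apply, LinearMap.mul_apply', smul_eq_mul, zpow_neg_one]
  field_simp

variable {ι : Type*} (V : Finset ι) (a : ι → ℝ)

noncomputable def gibbsWeight (t : ℝ) (v : ι) : ℝ :=
  exp (t * a v) / ∑ w ∈ V, exp (t * a w)

noncomputable def gibbsMean (t : ℝ) : ℝ :=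
  ∑ v ∈ V, gibbsWeight V a t v * a v

variable {V}

theorem sum_exp_mul_pos (hV : V.Nonempty) (t : ℝ) : 0 < ∑ v ∈ V, exp (t * a v) :=
  sum_pos (fun _ _ => exp_pos _) hV

theorem gibbsWeight_nonneg (t : ℝ) (v : ι) : 0 ≤ gibbsWeight V a t v := by
  unfold gibbsWeight
  positivity

theorem sum_gibbsWeight (hV : V.Nonempty) (t : ℝ) : ∑ v ∈ V, gibbsWeight V a t v = 1 := by
  simp only [gibbsWeight]
  rw [← sum_div, div_self (sum_exp_mul_pos a hV t).ne']

theorem log_sum_exp_add_mul_gibbsMean_le (hV : V.Nonempty) (t₀ t : ℝ) :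
    log (∑ v ∈ V, exp (t₀ * a v)) + (t - t₀) * gibbsMean V a t₀ ≤
      log (∑ v ∈ V, exp (t * a v)) := by
  have hZ₀ := sum_exp_mul_pos a hV t₀
  have hZ := sum_exp_mul_pos a hV t
  have jensen := convexOn_exp.map_sum_le (fun v _ => gibbsWeight_nonneg a t₀ v)
    (sum_gibbsWeight a hV t₀) (fun v _ => mem_univ ((t - t₀) * a v))
  have hmean : ∑ v ∈ V, gibbsWeight V a t₀ v * ((t - t₀) * a v) =
      (t - t₀) * gibbsMean V a t₀ := by
    rw [gibbsMean, mul_sum]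
    exact sum_congr rfl fun _ _ => by ring
  have hratio : ∑ v ∈ V, gibbsWeight V a t₀ v * exp ((t - t₀) * a v) =
      (∑ v ∈ V, exp (t * a v)) / ∑ v ∈ V, exp (t₀ * a v) := by
    rw [sum_div]
    refine sum_congr rfl fun v _ => ?_
    rw [gibbsWeight, div_mul_eq_mul_div, ← exp_add]
    ring_nf
  simp only [smul_eq_mul, hmean, hratio] at jensen
  have := (le_log_iff_exp_le (div_pos hZ hZ₀)).2 jensen
  rw [log_div hZ.ne' hZ₀.ne'] at this
  linarith

theorem mul_gibbsMean_le_log_sum_exp (hV : V.Nonempty) (t : ℝ) :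
    t * gibbsMean V a t ≤ log (∑ v ∈ V, exp (t * a v)) := by
  have hZ := sum_exp_mul_pos a hV t
  calc t * gibbsMean V a t = ∑ v ∈ V, gibbsWeight V a t v * (t * a v) := by
        rw [gibbsMean, mul_sum]
        exact sum_congr rfl fun _ _ => by ring
    _ ≤ ∑ v ∈ V, gibbsWeight V a t v * log (∑ w ∈ V, exp (t * a w)) := by
        refine sum_le_sum fun v hv => mul_le_mul_of_nonneg_left ?_ (gibbsWeight_nonneg a t v)
        exact (le_log_iff_exp_le hZ).2 (single_le_sum (fun w _ => (exp_pos (t * a w)).le) hv)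
    _ = log (∑ v ∈ V, exp (t * a v)) := by rw [← sum_mul, sum_gibbsWeight a hV, one_mul]

theorem convexOn_inv_mul_log_sum_exp_sq_mul (hV : V.Nonempty) :
    ConvexOn ℝ (Ioi 0) fun s : ℝ => s⁻¹ * log (∑ v ∈ V, exp (s ^ 2 * a v)) := by
  refine ConvexOn.of_forall_exists_le_eq (convex_Ioi 0) fun s₀ _ => ?_
  set A := gibbsMean V a (s₀ ^ 2)
  set H := log (∑ v ∈ V, exp (s₀ ^ 2 * a v)) - s₀ ^ 2 * A
  have hH : 0 ≤ H := sub_nonneg.2 (mul_gibbsMean_le_log_sum_exp a hV _)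
  refine ⟨fun s => s⁻¹ * (s ^ 2 * A + H), convexOn_inv_mul_sq_mul_add A hH,
    fun s (hs : 0 < s) => ?_, by simp only [H, add_sub_cancel]⟩
  have tangent := log_sum_exp_add_mul_gibbsMean_le a hV (s₀ ^ 2) (s ^ 2)
  exact mul_le_mul_of_nonneg_left (by linarith) (inv_nonneg.2 hs.le)

theorem convexOn_continuousOn_radeBound_general (ℓ : ℕ)
    (V : Finset (EuclideanSpace ℝ (Fin ℓ))) (hV : V.Nonempty) :
    ConvexOn ℝ (Set.Ioi (0 : ℝ))
        (fun s : ℝ => s⁻¹ *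
          Real.log (∑ v ∈ V, Real.exp (s ^ 2 * ‖v‖ ^ 2 / (2 * (ℓ : ℝ) ^ 2)))) ∧
      ContinuousOn
        (fun s : ℝ => s⁻¹ *
          Real.log (∑ v ∈ V, Real.exp (s ^ 2 * ‖v‖ ^ 2 / (2 * (ℓ : ℝ) ^ 2))))
        (Set.Ioi (0 : ℝ)) := by
  have h := convexOn_inv_mul_log_sum_exp_sq_mul (fun v => ‖v‖ ^ 2 / (2 * (ℓ : ℝ) ^ 2)) hV
  simp only [← mul_div_assoc] at h
  exact ⟨h, h.continuousOn isOpen_Ioi⟩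

/-- The function w(s) = (1/s)·ln Σ_{v∈V} exp(s²‖v‖²/(2ℓ²)) is convex and continuous
on the positive reals. -/
theorem convexOn_continuousOn_radeBound (ℓ : ℕ) (hℓ : 1 ≤ ℓ)
    (V : Finset (EuclideanSpace ℝ (Fin ℓ))) (hV : V.Nonempty) :
    ConvexOn ℝ (Set.Ioi (0 : ℝ))
        (fun s : ℝ => s⁻¹ *
          Real.log (∑ v ∈ V, Real.exp (s ^ 2 * ‖v‖ ^ 2 / (2 * (ℓ : ℝ) ^ 2)))) ∧
      ContinuousOn
        (fun s : ℝ => s⁻¹ *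
          Real.log (∑ v ∈ V, Real.exp (s ^ 2 * ‖v‖ ^ 2 / (2 * (ℓ : ℝ) ^ 2))))
        (Set.Ioi (0 : ℝ)) :=
  convexOn_continuousOn_radeBound_general ℓ V hV
end

section
/- There is no undirected graph G=(V,E) in which the rangeset F⁺ (subgraphs of the betweenness functions f_w(u,v)=σ_{uv}(w)/σ_{uv}) shatters a set B = {((u_i,v_i), x_i) : 1 ≤ i ≤ 4} ⊆ D×[0,1] when at least three of the four pairs (u_i,v_i) satisfy σ_{u_i v_i} = 1 (a unique shortest path) and the remaining pair satisfies σ_{u_i v_i} ≤ 2. -/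
/-!
If `0 < x ≤ f_w(u,v)` then `w` is an internal vertex of a shortest `u`–`v` path, and when that
path is unique the converse holds for `x ≤ 1`. Shortest paths are convex: if `y, z` are internal
vertices of a shortest `s`–`t` path and `m` lies on a shortest `y`–`z` path, then `m` is internal
to some shortest `s`–`t` path. Of three vertices on a shortest path one lies between the other
two, so for three vertices `z₁, z₂, z₃` on a shortest path, where the two other than `zᵢ` are
internal to one shortest path of a pair `i`, some `zᵢ` is internal to a shortest path of pair `i`.

Let `a, b, c` be the pairs with a unique shortest path, `j` the fourth, and let `w k` cut out all
points but the `k`-th. If `x j > 1/2`, then `σ_j ≤ 2` forces `w a, w b, w c` onto every shortest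
path of `j`, and these three vertices contradict the previous paragraph. If `x j ≤ 1/2`, each of
`w a, w b, w c` lies on one of the at most two shortest paths of `j`, so two of them, say `w a`
and `w b`, share one; then `w a, w b, w j` on the shortest path of `c` give the contradiction.
-/

/-- Number of shortest paths from `u` to `v` in `G`. -/
noncomputable def sigmaSP {V : Type*} (G : SimpleGraph V) (u v : V) : ℕ :=
  Nat.card {p : G.Walk u v // p.IsPath ∧ p.length = G.dist u v}

/-- Number of shortest paths from `u` to `v` having `w` as an internal vertex. -/
noncomputable def sigmaSPThrough {V : Type*} (G : SimpleGraph V) (u v w : V) : ℕ :=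
  Nat.card {p : G.Walk u v //
    p.IsPath ∧ p.length = G.dist u v ∧ w ∈ p.support ∧ w ≠ u ∧ w ≠ v}

/-- The function f_w(u,v) = σ_{uv}(w)/σ_{uv}; equals 0 when σ_{uv} = 0. -/
noncomputable def bcFrac {V : Type*} (G : SimpleGraph V) (u v w : V) : ℝ :=
  (sigmaSPThrough G u v w : ℝ) / (sigmaSP G u v : ℝ)

/-- `B ⊆ D×[0,1]` is shattered by the rangeset `F⁺ = {R_{f_w} : w ∈ V}`, where
`R_{f_w} = {((u,v),t) : t ≤ f_w(u,v)}`. -/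
def ShattersBC {V : Type*} (G : SimpleGraph V) (B : Set ((V × V) × ℝ)) : Prop :=
  ∀ C ⊆ B, ∃ w : V, {p ∈ B | p.2 ≤ bcFrac G p.1.1 p.1.2 w} = C

theorem eq_or_eq_or_eq_of_natCard_le_two {α : Type*} [Finite α] (h : Nat.card α ≤ 2)
    (a b c : α) : a = b ∨ a = c ∨ b = c := by
  classical
  have := Fintype.ofFinite α
  by_contra! hne
  have h3 : ({a, b, c} : Finset α).card = 3 :=
    Finset.card_eq_three.2 ⟨a, b, c, hne.1, hne.2.1, hne.2.2, rfl⟩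
  have := Finset.card_le_univ ({a, b, c} : Finset α)
  rw [Nat.card_eq_fintype_card] at h
  omega

namespace SimpleGraph.Walk

variable {V : Type*} {G : SimpleGraph V} {s t x y z : V} {p : G.Walk s t}

def IsInternalVertex (p : G.Walk s t) (w : V) : Prop :=
  w ∈ p.support ∧ w ≠ s ∧ w ≠ t

theorem reachable_of_mem_support_left (hx : x ∈ p.support) : G.Reachable s x := by
  obtain ⟨q, -, -⟩ := mem_support_iff_exists_append.1 hx
  exact q.reachable

theorem reachable_of_mem_support_right (hx : x ∈ p.support) : G.Reachable x t := by
  obtain ⟨-, r, -⟩ := mem_support_iff_exists_append.1 hx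
  exact r.reachable

theorem dist_add_dist_of_length_eq_dist (hp : p.length = G.dist s t) (hx : x ∈ p.support) :
    G.dist s x + G.dist x t = G.dist s t := by
  classical
  rw [← length_eq_dist_of_subwalk hp (p.isSubwalk_takeUntil hx),
    ← length_eq_dist_of_subwalk hp (p.isSubwalk_dropUntil hx), ← length_append, take_spec, hp]

theorem dist_eq_natDist_of_length_eq_dist (hp : p.length = G.dist s t) (hx : x ∈ p.support)
    (hy : y ∈ p.support) : G.dist x y = (G.dist s x).dist (G.dist s y) := by
  classical
  wlog hxy : G.dist s x ≤ G.dist s y generalizing x y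
  · rw [dist_comm, Nat.dist_comm, this hy hx (by omega)]
  have hxt := dist_add_dist_of_length_eq_dist hp hx
  have hyt := dist_add_dist_of_length_eq_dist hp hy
  have hq := length_eq_dist_of_subwalk hp (p.isSubwalk_takeUntil hx)
  have hr := length_eq_dist_of_subwalk hp (p.isSubwalk_dropUntil hx)
  rw [← p.take_spec hx, mem_support_append_iff] at hy
  unfold Nat.dist
  rcases hy with hy | hy
  · have := dist_add_dist_of_length_eq_dist hq hy
    rw [dist_comm (u := y)] at this
    omega
  · have := dist_add_dist_of_length_eq_dist hr hy
    omega

theorem dist_add_dist_or_of_length_eq_dist (hp : p.length = G.dist s t) (hx : x ∈ p.support)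
    (hy : y ∈ p.support) (hz : z ∈ p.support) :
    G.dist x y + G.dist y z = G.dist x z ∨ G.dist y x + G.dist x z = G.dist y z ∨
      G.dist x z + G.dist z y = G.dist x y := by
  have hxy := dist_eq_natDist_of_length_eq_dist hp hx hy
  have hxz := dist_eq_natDist_of_length_eq_dist hp hx hz
  have hyz := dist_eq_natDist_of_length_eq_dist hp hy hz
  rw [dist_comm (u := y) (v := x), dist_comm (u := z) (v := y)]
  unfold Nat.dist at *
  omega

end SimpleGraph.Walk

section

open SimpleGraph Walk

variable {V : Type*} {G : SimpleGraph V}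

section ShortestPaths

variable {s t w : V}

theorem sigmaSPThrough_eq_natCard : sigmaSPThrough G s t w =
    Nat.card {p : {p : G.Walk s t // p.IsPath ∧ p.length = G.dist s t} //
      p.1.IsInternalVertex w} :=
  Nat.card_congr <| (Equiv.subtypeEquivRight fun _ => and_assoc.symm).trans
    (Equiv.subtypeSubtypeEquivSubtypeInter _ _).symm

instance [Finite V] : Finite {p : G.Walk s t // p.IsPath ∧ p.length = G.dist s t} := by
  classical
  have := Fintype.ofFinite V
  infer_instance

variable [Finite V]

theorem sigmaSPThrough_pos_iff : 0 < sigmaSPThrough G s t w ↔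
    ∃ p : G.Walk s t, p.length = G.dist s t ∧ p.IsInternalVertex w := by
  rw [sigmaSPThrough_eq_natCard, Nat.card_pos_iff]
  simp only [nonempty_subtype, Subtype.exists, exists_prop,
    and_iff_left (Finite.of_injective _ Subtype.val_injective)]
  exact ⟨fun ⟨p, ⟨_, hp⟩, hw⟩ => ⟨p, hp, hw⟩,
    fun ⟨p, hp, hw⟩ => ⟨p, ⟨isPath_of_length_eq_dist p hp, hp⟩, hw⟩⟩

theorem sigmaSPThrough_le_sigmaSP : sigmaSPThrough G s t w ≤ sigmaSP G s t :=
  sigmaSPThrough_eq_natCard (G := G) ▸ Finite.card_subtype_le _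

theorem sigmaSPThrough_lt_sigmaSP {p : G.Walk s t} (hp : p.length = G.dist s t)
    (hw : ¬ p.IsInternalVertex w) : sigmaSPThrough G s t w < sigmaSP G s t :=
  sigmaSPThrough_eq_natCard (G := G) ▸
    Finite.card_subtype_lt (x := ⟨p, isPath_of_length_eq_dist p hp, hp⟩) hw

theorem exists_forall_isInternalVertex_of_sigmaSP_eq_one (hσ : sigmaSP G s t = 1) :
    ∃ p : G.Walk s t, p.length = G.dist s t ∧
      ∀ w, 0 < sigmaSPThrough G s t w → p.IsInternalVertex w := by
  obtain ⟨⟨p, -, hp⟩⟩ := (Nat.card_eq_one_iff_unique.1 hσ).2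
  refine ⟨p, hp, fun w hw => by_contra fun h => ?_⟩
  have := sigmaSPThrough_lt_sigmaSP hp h
  omega

theorem exists_isInternalVertex_of_sigmaSP_le_two (hσ : sigmaSP G s t ≤ 2) {y₁ y₂ y₃ : V}
    (h₁ : 0 < sigmaSPThrough G s t y₁) (h₂ : 0 < sigmaSPThrough G s t y₂)
    (h₃ : 0 < sigmaSPThrough G s t y₃) :
    ∃ p : G.Walk s t, p.length = G.dist s t ∧
      (p.IsInternalVertex y₁ ∧ p.IsInternalVertex y₂ ∨
        p.IsInternalVertex y₁ ∧ p.IsInternalVertex y₃ ∨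
        p.IsInternalVertex y₂ ∧ p.IsInternalVertex y₃) := by
  obtain ⟨p₁, hp₁, hy₁⟩ := sigmaSPThrough_pos_iff.1 h₁
  obtain ⟨p₂, hp₂, hy₂⟩ := sigmaSPThrough_pos_iff.1 h₂
  obtain ⟨p₃, hp₃, hy₃⟩ := sigmaSPThrough_pos_iff.1 h₃
  rcases eq_or_eq_or_eq_of_natCard_le_two hσ ⟨p₁, isPath_of_length_eq_dist p₁ hp₁, hp₁⟩
    ⟨p₂, isPath_of_length_eq_dist p₂ hp₂, hp₂⟩ ⟨p₃, isPath_of_length_eq_dist p₃ hp₃, hp₃⟩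
    with h | h | h <;> obtain rfl := congrArg Subtype.val h
  exacts [⟨p₁, hp₁, .inl ⟨hy₁, hy₂⟩⟩, ⟨p₁, hp₁, .inr (.inl ⟨hy₁, hy₃⟩)⟩,
    ⟨p₂, hp₂, .inr (.inr ⟨hy₂, hy₃⟩)⟩]

theorem sigmaSPThrough_pos_of_dist_add_dist {m : V} (hs : G.Reachable s m) (ht : G.Reachable m t)
    (hm : G.dist s m + G.dist m t = G.dist s t) (hms : m ≠ s) (hmt : m ≠ t) :
    0 < sigmaSPThrough G s t m := by
  obtain ⟨p, hp⟩ := hs.exists_walk_length_eq_dist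
  obtain ⟨q, hq⟩ := ht.exists_walk_length_eq_dist
  exact sigmaSPThrough_pos_iff.2 ⟨p.append q, by rw [length_append, hp, hq, hm],
    (mem_support_append_iff p q).2 (.inl p.end_mem_support), hms, hmt⟩

theorem sigmaSPThrough_pos_of_isInternalVertex_of_dist_add_dist {R : G.Walk s t} {x y m : V}
    (hR : R.length = G.dist s t) (hx : R.IsInternalVertex x) (hy : R.IsInternalVertex y)
    (hxm : G.Reachable x m) (hm : G.dist x m + G.dist m y = G.dist x y) :
    0 < sigmaSPThrough G s t m := by
  -- Whichever of `x`, `y` comes first on `R`, the triangle inequalities through it and the other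
  -- squeeze `d(s,m) + d(m,t)` down to `d(s,t)`; writing `d(x,y)` with `Nat.dist` lets `omega`
  -- treat both orders at once.
  obtain ⟨hxR, hxs, hxt⟩ := hx
  obtain ⟨hyR, hys, hyt⟩ := hy
  have rsx := reachable_of_mem_support_left hxR
  have rsy := reachable_of_mem_support_left hyR
  have rxt := reachable_of_mem_support_right hxR
  have ryt := reachable_of_mem_support_right hyR
  have rym : G.Reachable y m := rsy.symm.trans (rsx.trans hxm)
  have := dist_add_dist_of_length_eq_dist hR hxR
  have := dist_add_dist_of_length_eq_dist hR hyR
  have := dist_eq_natDist_of_length_eq_dist hR hxR hyR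
  have := rsx.pos_dist_of_ne hxs.symm
  have := rsy.pos_dist_of_ne hys.symm
  have := rxt.pos_dist_of_ne hxt
  have := ryt.pos_dist_of_ne hyt
  have := rsx.dist_triangle_left m
  have := rsy.dist_triangle_left m
  have := rxt.dist_triangle_right m
  have := ryt.dist_triangle_right m
  have := (rsx.trans hxm).dist_triangle_left t
  have := dist_comm (G := G) (u := x) (v := m)
  have := dist_comm (G := G) (u := y) (v := m)
  unfold Nat.dist at *
  refine sigmaSPThrough_pos_of_dist_add_dist (rsx.trans hxm) (rym.symm.trans ryt) (by omega)
    ?_ ?_ <;> rintro rfl <;> simp only [dist_self] at * <;> omega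

theorem sigmaSPThrough_pos_or_of_mem_support {s₁ t₁ s₂ t₂ s₃ t₃ z₁ z₂ z₃ : V} {P : G.Walk s t}
    {R₁ : G.Walk s₁ t₁} {R₂ : G.Walk s₂ t₂} {R₃ : G.Walk s₃ t₃} (hP : P.length = G.dist s t)
    (h₁ : z₁ ∈ P.support) (h₂ : z₂ ∈ P.support) (h₃ : z₃ ∈ P.support)
    (hR₁ : R₁.length = G.dist s₁ t₁) (hR₂ : R₂.length = G.dist s₂ t₂)
    (hR₃ : R₃.length = G.dist s₃ t₃)
    (h₁₂ : R₁.IsInternalVertex z₂) (h₁₃ : R₁.IsInternalVertex z₃)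
    (h₂₁ : R₂.IsInternalVertex z₁) (h₂₃ : R₂.IsInternalVertex z₃)
    (h₃₁ : R₃.IsInternalVertex z₁) (h₃₂ : R₃.IsInternalVertex z₂) :
    0 < sigmaSPThrough G s₁ t₁ z₁ ∨ 0 < sigmaSPThrough G s₂ t₂ z₂ ∨
      0 < sigmaSPThrough G s₃ t₃ z₃ := by
  have reach {a b : V} (ha : a ∈ P.support) (hb : b ∈ P.support) : G.Reachable a b :=
    (reachable_of_mem_support_left ha).symm.trans (reachable_of_mem_support_left hb)
  rcases dist_add_dist_or_of_length_eq_dist hP h₁ h₂ h₃ with h | h | h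
  · exact .inr <| .inl <|
      sigmaSPThrough_pos_of_isInternalVertex_of_dist_add_dist hR₂ h₂₁ h₂₃ (reach h₁ h₂) h
  · exact .inl <|
      sigmaSPThrough_pos_of_isInternalVertex_of_dist_add_dist hR₁ h₁₂ h₁₃ (reach h₂ h₁) h
  · exact .inr <| .inr <|
      sigmaSPThrough_pos_of_isInternalVertex_of_dist_add_dist hR₃ h₃₁ h₃₂ (reach h₁ h₃) h

end ShortestPaths

section BcFrac

variable {s t w : V} {x : ℝ}

theorem bcFrac_nonneg : 0 ≤ bcFrac G s t w := by
  unfold bcFrac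
  positivity

theorem sigmaSPThrough_pos_of_bcFrac_pos (h : 0 < bcFrac G s t w) : 0 < sigmaSPThrough G s t w :=
  Nat.pos_of_ne_zero fun h0 => by simp [bcFrac, h0] at h

variable [Finite V]

theorem le_bcFrac_iff_sigmaSPThrough_pos (hx : 0 < x) (hxσ : x * sigmaSP G s t ≤ 1) :
    x ≤ bcFrac G s t w ↔ 0 < sigmaSPThrough G s t w := by
  refine ⟨fun h => sigmaSPThrough_pos_of_bcFrac_pos (hx.trans_le h), fun h => ?_⟩
  have hT : (1 : ℝ) ≤ sigmaSPThrough G s t w := by exact_mod_cast h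
  have hσ : (0 : ℝ) < sigmaSP G s t := by exact_mod_cast h.trans_le sigmaSPThrough_le_sigmaSP
  rw [bcFrac, le_div_iff₀ hσ]
  linarith

theorem isInternalVertex_of_le_bcFrac {p : G.Walk s t} (hp : p.length = G.dist s t)
    (hxσ : (sigmaSP G s t : ℝ) - 1 < x * sigmaSP G s t) (h : x ≤ bcFrac G s t w) :
    p.IsInternalVertex w := by
  by_contra hw
  have hlt : (sigmaSPThrough G s t w : ℝ) + 1 ≤ sigmaSP G s t := by
    exact_mod_cast sigmaSPThrough_lt_sigmaSP hp hw
  have hσ : (0 : ℝ) < sigmaSP G s t := by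
    linarith [(sigmaSPThrough G s t w).cast_nonneg (α := ℝ)]
  rw [bcFrac, le_div_iff₀ hσ] at h
  linarith

end BcFrac

theorem ShattersBC.exists_forall_le_bcFrac_iff {ι : Type*} {u v : ι → V} {x : ι → ℝ}
    (hsh : ShattersBC G {p | ∃ i, p = ((u i, v i), x i)})
    (hinj : Function.Injective fun i => ((u i, v i), x i)) (S : Set ι) :
    ∃ w, ∀ i, x i ≤ bcFrac G (u i) (v i) w ↔ i ∈ S := by
  obtain ⟨w, hw⟩ := hsh ((fun i => ((u i, v i), x i)) '' S) <| by
    rintro _ ⟨i, -, rfl⟩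
    exact ⟨i, rfl⟩
  refine ⟨w, fun i => ?_⟩
  have := Set.ext_iff.1 hw ((u i, v i), x i)
  rwa [Set.mem_sep_iff, and_iff_right ⟨i, rfl⟩, hinj.mem_set_image] at this

section Shattering

variable [Finite V] {ι : Type*} {u v w : ι → V} {a b c j : ι}

theorem exists_isInternalVertex_of_sigmaSPThrough_pos_iff {i : ι}
    (hσ : sigmaSP G (u i) (v i) = 1)
    (hT : ∀ k, 0 < sigmaSPThrough G (u i) (v i) (w k) ↔ i ≠ k) :
    ∃ R : G.Walk (u i) (v i), R.length = G.dist (u i) (v i) ∧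
      ∀ k, i ≠ k → R.IsInternalVertex (w k) := by
  obtain ⟨R, hR, hRw⟩ := exists_forall_isInternalVertex_of_sigmaSP_eq_one hσ
  exact ⟨R, hR, fun k hk => hRw _ ((hT k).2 hk)⟩

theorem false_of_mem_support_of_length_eq_dist
    (hab : a ≠ b) (hac : a ≠ c) (hbc : b ≠ c) (haj : a ≠ j) (hbj : b ≠ j) (hcj : c ≠ j)
    (hσ : ∀ i ≠ j, sigmaSP G (u i) (v i) = 1)
    (hT : ∀ i ≠ j, ∀ k, 0 < sigmaSPThrough G (u i) (v i) (w k) ↔ i ≠ k)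
    {s t : V} {P : G.Walk s t} (hP : P.length = G.dist s t)
    (ha : w a ∈ P.support) (hb : w b ∈ P.support) (hc : w c ∈ P.support) : False := by
  obtain ⟨Ra, hRa, hwa⟩ :=
    exists_isInternalVertex_of_sigmaSPThrough_pos_iff (hσ a haj) (hT a haj)
  obtain ⟨Rb, hRb, hwb⟩ :=
    exists_isInternalVertex_of_sigmaSPThrough_pos_iff (hσ b hbj) (hT b hbj)
  obtain ⟨Rc, hRc, hwc⟩ :=
    exists_isInternalVertex_of_sigmaSPThrough_pos_iff (hσ c hcj) (hT c hcj)
  obtain h | h | h := sigmaSPThrough_pos_or_of_mem_support hP ha hb hc hRa hRb hRc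
    (hwa b hab) (hwa c hac) (hwb a hab.symm) (hwb c hbc) (hwc a hac.symm) (hwc b hbc.symm)
  exacts [(hT a haj a).1 h rfl, (hT b hbj b).1 h rfl, (hT c hcj c).1 h rfl]

theorem false_of_isInternalVertex_of_isInternalVertex
    (hab : a ≠ b) (hac : a ≠ c) (hbc : b ≠ c) (haj : a ≠ j) (hbj : b ≠ j) (hcj : c ≠ j)
    (hσ : ∀ i ≠ j, sigmaSP G (u i) (v i) = 1)
    (hT : ∀ i k, 0 < sigmaSPThrough G (u i) (v i) (w k) ↔ i ≠ k)
    {P : G.Walk (u j) (v j)} (hP : P.length = G.dist (u j) (v j))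
    (ha : P.IsInternalVertex (w a)) (hb : P.IsInternalVertex (w b)) : False := by
  obtain ⟨Ra, hRa, hwa⟩ := exists_isInternalVertex_of_sigmaSPThrough_pos_iff (hσ a haj) (hT a)
  obtain ⟨Rb, hRb, hwb⟩ := exists_isInternalVertex_of_sigmaSPThrough_pos_iff (hσ b hbj) (hT b)
  obtain ⟨Rc, hRc, hwc⟩ := exists_isInternalVertex_of_sigmaSPThrough_pos_iff (hσ c hcj) (hT c)
  obtain h | h | h := sigmaSPThrough_pos_or_of_mem_support hRc (hwc a hac.symm).1
    (hwc b hbc.symm).1 (hwc j hcj).1 hRa hRb hP (hwa b hab) (hwa j haj) (hwb a hab.symm)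
    (hwb j hbj) ha hb
  exacts [(hT a a).1 h rfl, (hT b b).1 h rfl, (hT j j).1 h rfl]

theorem false_of_sigmaSPThrough_pos_iff
    (hab : a ≠ b) (hac : a ≠ c) (hbc : b ≠ c) (haj : a ≠ j) (hbj : b ≠ j) (hcj : c ≠ j)
    (hσ : ∀ i ≠ j, sigmaSP G (u i) (v i) = 1) (hσj : sigmaSP G (u j) (v j) ≤ 2)
    (hT : ∀ i k, 0 < sigmaSPThrough G (u i) (v i) (w k) ↔ i ≠ k) : False := by
  obtain ⟨P, hP, h | h | h⟩ := exists_isInternalVertex_of_sigmaSP_le_two hσj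
    ((hT j a).2 haj.symm) ((hT j b).2 hbj.symm) ((hT j c).2 hcj.symm)
  · exact false_of_isInternalVertex_of_isInternalVertex hab hac hbc haj hbj hcj hσ hT hP h.1 h.2
  · exact false_of_isInternalVertex_of_isInternalVertex hac hab hbc.symm haj hcj hbj hσ hT hP
      h.1 h.2
  · exact false_of_isInternalVertex_of_isInternalVertex hbc hab.symm hac.symm hbj hcj haj hσ hT hP
      h.1 h.2

theorem false_of_forall_le_bcFrac_iff {x : ι → ℝ}
    (hab : a ≠ b) (hac : a ≠ c) (hbc : b ≠ c) (haj : a ≠ j) (hbj : b ≠ j) (hcj : c ≠ j)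
    (hx : ∀ i, x i ≤ 1) (hσ : ∀ i ≠ j, sigmaSP G (u i) (v i) = 1)
    (hσj : sigmaSP G (u j) (v j) ≤ 2)
    (hw : ∀ k i, x i ≤ bcFrac G (u i) (v i) (w k) ↔ i ≠ k) : False := by
  have hx₀ (i) : 0 < x i := lt_of_not_ge fun h => (hw i i).1 (h.trans bcFrac_nonneg) rfl
  have hT (i k) (hi : x i * sigmaSP G (u i) (v i) ≤ 1) :
      0 < sigmaSPThrough G (u i) (v i) (w k) ↔ i ≠ k :=
    (le_bcFrac_iff_sigmaSPThrough_pos (hx₀ i) hi).symm.trans (hw k i)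
  have hxσ (i) (hi : i ≠ j) : x i * sigmaSP G (u i) (v i) ≤ 1 := by simpa [hσ i hi] using hx i
  have hσj' : (sigmaSP G (u j) (v j) : ℝ) ≤ 2 := by exact_mod_cast hσj
  rcases le_or_gt (x j) (1 / 2) with hxj | hxj
  · have hxσj : x j * sigmaSP G (u j) (v j) ≤ 1 := by nlinarith [hx₀ j]
    refine false_of_sigmaSPThrough_pos_iff hab hac hbc haj hbj hcj hσ hσj fun i k => hT i k ?_
    rcases eq_or_ne i j with rfl | hi
    exacts [hxσj, hxσ i hi]
  · obtain ⟨P, hP, -⟩ := sigmaSPThrough_pos_iff.1 <| sigmaSPThrough_pos_of_bcFrac_pos <|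
      (hx₀ j).trans_le <| (hw a j).2 haj.symm
    have hxσj : (sigmaSP G (u j) (v j) : ℝ) - 1 < x j * sigmaSP G (u j) (v j) := by
      nlinarith [mul_nonneg (sub_nonneg.2 hσj') (sub_nonneg.2 (hx j))]
    have hwP (k) (hk : k ≠ j) : w k ∈ P.support :=
      (isInternalVertex_of_le_bcFrac hP hxσj ((hw k j).2 hk.symm)).1
    exact false_of_mem_support_of_length_eq_dist hab hac hbc haj hbj hcj hσ
      (fun i hi k => hT i k (hxσ i hi)) hP (hwP a haj) (hwP b hbj) (hwP c hcj)

end Shattering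

end

theorem no_shatter_of_three_unique_sp_general {V : Type*} [Fintype V] (G : SimpleGraph V)
    (u v : Fin 4 → V) (x : Fin 4 → ℝ)
    (hx : ∀ i, x i ∈ Set.Icc (0 : ℝ) 1)
    (hinj : Function.Injective (fun i => ((u i, v i), x i)))
    (hsp : ∃ j, sigmaSP G (u j) (v j) ≤ 2 ∧ ∀ i, i ≠ j → sigmaSP G (u i) (v i) = 1) :
    ¬ ShattersBC G {p | ∃ i, p = ((u i, v i), x i)} := by
  intro hsh
  obtain ⟨j, hσj, hσ⟩ := hsp
  have three_others (j : Fin 4) :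
      ∃ a b c : Fin 4, a ≠ b ∧ a ≠ c ∧ b ≠ c ∧ a ≠ j ∧ b ≠ j ∧ c ≠ j := by
    revert j
    decide
  obtain ⟨a, b, c, hab, hac, hbc, haj, hbj, hcj⟩ := three_others j
  choose w hw using fun k => hsh.exists_forall_le_bcFrac_iff hinj {k}ᶜ
  exact false_of_forall_le_bcFrac_iff hab hac hbc haj hbj hcj (fun i => (hx i).2) hσ hσj hw

/-- No undirected graph allows the rangeset of betweenness functions to shatter a
4-element set `B = {((u_i,v_i),x_i)}` when at least three pairs have a unique
shortest path and the remaining pair has at most two shortest paths. -/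
theorem no_shatter_of_three_unique_sp {V : Type*} [Fintype V] (G : SimpleGraph V)
    (u v : Fin 4 → V) (x : Fin 4 → ℝ)
    (hne : ∀ i, u i ≠ v i) (hx : ∀ i, x i ∈ Set.Icc (0 : ℝ) 1)
    (hinj : Function.Injective (fun i => ((u i, v i), x i)))
    (hsp : ∃ j, sigmaSP G (u j) (v j) ≤ 2 ∧ ∀ i, i ≠ j → sigmaSP G (u i) (v i) = 1) :
    ¬ ShattersBC G {p | ∃ i, p = ((u i, v i), x i)} :=
  no_shatter_of_three_unique_sp_general G u v x hx hinj hsp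
end

section
/- Let L > 0, ε ∈ (0,1), and 0 ≤ ω < ε. The cubic equation −8L³ + L²(−16ω + (1+4ε)²)x − 4L(ω−ε)²(1+4ε)x² + 4(ω−ε)⁴x³ = 0 in the unknown x has three real roots, given in closed form via the trigonometric method: with z = 48ω + (1+4ε)², the roots are (L/3)((1+4ε) − √z·cos θ)/(ω−ε)² and (L/6)(2(1+4ε) + √z(cos θ ± √3 sin θ))/(ω−ε)² for an appropriate angle θ. -/
/-!
Up to the factor `(16/27) L⁶ (ω - ε)⁴`, the discriminant is `z³ - q²` with `u = 1 + 4ε`,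
`z = u² + 48ω` and `q = -u³ + 144uω + 216(ω - ε)²`, so it suffices that `|q| ≤ R³` for `R = √z`.
The lower bound follows from `R ≥ u`. For the upper one, `48ω = R² - u²` turns `R³ - q` into
`(R + u)(R - 2u)² - 216(ε - ω)²`, and `32` times this is `(R + u - 6)²` times a factor that is
nonnegative because `ω ≤ ε` and `R ≤ 2u`. The roots then come from Viète's trigonometric solution
of a depressed cubic with nonnegative discriminant.
-/

open Real

theorem exists_cos_three_mul_eq {x : ℝ} (hx : |x| ≤ 1) : ∃ θ : ℝ, cos (3 * θ) = x := by
  obtain ⟨hx₁, hx₂⟩ := abs_le.mp hx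
  exact ⟨arccos x / 3, by rw [mul_div_cancel₀ _ three_ne_zero, cos_arccos hx₁ hx₂]⟩

theorem exists_depressed_cubic_eq_prod {p q : ℝ} (h : 4 * p ^ 3 + 27 * q ^ 2 ≤ 0) :
    ∃ r₁ r₂ r₃ : ℝ, ∀ t, t ^ 3 + p * t + q = (t - r₁) * (t - r₂) * (t - r₃) := by
  have hp : p ≤ 0 := (Odd.pow_nonpos_iff (n := 3) (by decide)).mp (by nlinarith [sq_nonneg q])
  set m := 2 * √(-p / 3) with hm_def
  have hm0 : 0 ≤ m := by positivity
  have hm : m ^ 2 = -4 * p / 3 := by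
    rw [hm_def, mul_pow, sq_sqrt (by linarith)]
    ring
  have hq : |4 * q| ≤ m ^ 3 :=
    abs_le_of_sq_le_sq (by rw [show (m ^ 3) ^ 2 = (m ^ 2) ^ 3 by ring, hm]; linarith) (by positivity)
  obtain ⟨θ, hθ⟩ := exists_cos_three_mul_eq (x := -4 * q / m ^ 3) <| by
    rw [abs_div, abs_of_nonneg (pow_nonneg hm0 3), neg_mul, abs_neg]
    exact div_le_one_of_le₀ hq (by positivity)
  have hc : m ^ 3 * (4 * cos θ ^ 3 - 3 * cos θ) = -4 * q := by
    rw [← cos_three_mul, hθ]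
    rcases eq_or_ne m 0 with hm' | hm'
    · have hq0 : q = 0 := by simpa using abs_nonpos_iff.mp (hq.trans_eq (by simp [hm']))
      simp [hm', hq0]
    · exact mul_div_cancel₀ _ (pow_ne_zero 3 hm')
  have hs : (√3 * sin θ) ^ 2 = 3 - 3 * cos θ ^ 2 := by
    rw [mul_pow, sq_sqrt zero_le_three]
    linarith [sin_sq_add_cos_sq θ]
  -- `m cos θ` and `m cos (θ ± 2π/3)`
  refine ⟨m * cos θ, m * (-cos θ + √3 * sin θ) / 2, m * (-cos θ - √3 * sin θ) / 2, fun t => ?_⟩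
  linear_combination (3 / 4 * t) * hm + (m ^ 2 * t / 4 - m ^ 3 * cos θ / 4) * hs + hc / 4

theorem Cubic.exists_eq_mul_prod_of_discr_nonneg (P : Cubic ℝ) (ha : P.a ≠ 0)
    (h : 0 ≤ P.discr) : ∃ r₁ r₂ r₃ : ℝ, ∀ x,
      P.a * x ^ 3 + P.b * x ^ 2 + P.c * x + P.d = P.a * (x - r₁) * (x - r₂) * (x - r₃) := by
  obtain ⟨a, b, c, d⟩ := P
  set p := (3 * a * c - b ^ 2) / (3 * a ^ 2)
  set q := (2 * b ^ 3 - 9 * a * b * c + 27 * a ^ 2 * d) / (27 * a ^ 3)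
  have hpq : 4 * p ^ 3 + 27 * q ^ 2 = -(Cubic.discr ⟨a, b, c, d⟩) / a ^ 4 := by
    simp only [p, q, Cubic.discr]
    field_simp
    ring
  obtain ⟨r₁, r₂, r₃, hr⟩ := exists_depressed_cubic_eq_prod (p := p) (q := q) <| by
    rw [hpq]
    exact div_nonpos_of_nonpos_of_nonneg (neg_nonpos.mpr h) (by positivity)
  refine ⟨r₁ - b / (3 * a), r₂ - b / (3 * a), r₃ - b / (3 * a), fun x => ?_⟩
  calc a * x ^ 3 + b * x ^ 2 + c * x + d
      = a * ((x + b / (3 * a)) ^ 3 + p * (x + b / (3 * a)) + q) := by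
        simp only [p, q]
        field_simp
        ring
    _ = _ := by
        rw [hr]
        ring

noncomputable def abraCubic (L ω ε : ℝ) : Cubic ℝ :=
  ⟨4 * (ω - ε) ^ 4, -4 * L * (ω - ε) ^ 2 * (1 + 4 * ε), L ^ 2 * (-16 * ω + (1 + 4 * ε) ^ 2),
    -8 * L ^ 3⟩

theorem abraCubic_discr (L ω ε : ℝ) :
    (abraCubic L ω ε).discr = 16 / 27 * L ^ 6 * (ω - ε) ^ 4 *
      (((1 + 4 * ε) ^ 2 + 48 * ω) ^ 3 -
        (-(1 + 4 * ε) ^ 3 + 144 * (1 + 4 * ε) * ω + 216 * (ω - ε) ^ 2) ^ 2) := by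
  simp only [abraCubic, Cubic.discr]
  ring

theorem abraCubic_sub_sq_le {R ω ε : ℝ} (hR : R ^ 2 = (1 + 4 * ε) ^ 2 + 48 * ω)
    (hRu : 1 + 4 * ε ≤ R) (hε : 0 ≤ ε) (hωε : ω ≤ ε) :
    216 * (ε - ω) ^ 2 ≤ (R + (1 + 4 * ε)) * (R - 2 * (1 + 4 * ε)) ^ 2 := by
  have hR2 : R ≤ 2 * (1 + 4 * ε) := by nlinarith [sq_nonneg (1 - 4 * ε)]
  have key : 32 * ((R + (1 + 4 * ε)) * (R - 2 * (1 + 4 * ε)) ^ 2) - 6912 * (ε - ω) ^ 2 =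
      (R + (1 + 4 * ε) - 6) ^ 2 *
        (48 * (ε - ω) + 2 * (R - (1 + 4 * ε) + 2) * (2 * (1 + 4 * ε) - R)) := by
    linear_combination
      (-3 + 3 * R ^ 2 - 312 * ε - 48 * ε ^ 2 + 144 * ω - (R + (1 + 4 * ε) - 6) ^ 2) * hR
  have hfactor : 0 ≤ 48 * (ε - ω) + 2 * (R - (1 + 4 * ε) + 2) * (2 * (1 + 4 * ε) - R) := by
    have := mul_nonneg (show 0 ≤ R - (1 + 4 * ε) + 2 by linarith) (sub_nonneg.mpr hR2)
    linarith
  nlinarith [mul_nonneg (sq_nonneg (R + (1 + 4 * ε) - 6)) hfactor]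

theorem abraCubic_sq_le_cube {ω ε : ℝ} (hω : 0 ≤ ω) (hε : 0 ≤ ε) (hωε : ω ≤ ε) :
    (-(1 + 4 * ε) ^ 3 + 144 * (1 + 4 * ε) * ω + 216 * (ω - ε) ^ 2) ^ 2 ≤
      ((1 + 4 * ε) ^ 2 + 48 * ω) ^ 3 := by
  set R := √((1 + 4 * ε) ^ 2 + 48 * ω)
  have hR : R ^ 2 = (1 + 4 * ε) ^ 2 + 48 * ω := sq_sqrt (by positivity)
  have hRu : 1 + 4 * ε ≤ R := (le_sqrt (by linarith) (by positivity)).mpr (by linarith)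
  have hu3 : (1 + 4 * ε) ^ 3 ≤ R ^ 3 := pow_le_pow_left₀ (by linarith) hRu 3
  have hlow : -R ^ 3 ≤ -(1 + 4 * ε) ^ 3 + 144 * (1 + 4 * ε) * ω + 216 * (ω - ε) ^ 2 := by
    nlinarith [mul_nonneg (show 0 ≤ 1 + 4 * ε by linarith) hω, sq_nonneg (ω - ε)]
  have hup : -(1 + 4 * ε) ^ 3 + 144 * (1 + 4 * ε) * ω + 216 * (ω - ε) ^ 2 ≤ R ^ 3 := by
    nlinarith [abraCubic_sub_sq_le hR hRu hε hωε]
  calc _ ≤ (R ^ 3) ^ 2 := sq_le_sq' hlow hup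
    _ = _ := by rw [← hR]; ring

theorem abraCubic_discr_nonneg (L : ℝ) {ω ε : ℝ} (hω : 0 ≤ ω) (hε : 0 ≤ ε) (hωε : ω ≤ ε) :
    0 ≤ (abraCubic L ω ε).discr := by
  rw [abraCubic_discr]
  exact mul_nonneg (by positivity) (sub_nonneg.mpr (abraCubic_sq_le_cube hω hε hωε))

theorem cubic_all_roots_real_general (L ω ε : ℝ) (hω : 0 ≤ ω)
    (hε : ε ∈ Set.Ioo (0 : ℝ) 1) (hωε : ω < ε) :
    0 ≤ 18 * (4 * (ω - ε) ^ 4) * (-4 * L * (ω - ε) ^ 2 * (1 + 4 * ε)) *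
          (L ^ 2 * (-16 * ω + (1 + 4 * ε) ^ 2)) * (-8 * L ^ 3) -
        4 * (-4 * L * (ω - ε) ^ 2 * (1 + 4 * ε)) ^ 3 * (-8 * L ^ 3) +
        (-4 * L * (ω - ε) ^ 2 * (1 + 4 * ε)) ^ 2 *
          (L ^ 2 * (-16 * ω + (1 + 4 * ε) ^ 2)) ^ 2 -
        4 * (4 * (ω - ε) ^ 4) * (L ^ 2 * (-16 * ω + (1 + 4 * ε) ^ 2)) ^ 3 -
        27 * (4 * (ω - ε) ^ 4) ^ 2 * (-8 * L ^ 3) ^ 2 ∧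
    ∃ r₁ r₂ r₃ : ℝ, ∀ x : ℝ,
      4 * (ω - ε) ^ 4 * x ^ 3 - 4 * L * (ω - ε) ^ 2 * (1 + 4 * ε) * x ^ 2 +
          L ^ 2 * (-16 * ω + (1 + 4 * ε) ^ 2) * x - 8 * L ^ 3
        = 4 * (ω - ε) ^ 4 * (x - r₁) * (x - r₂) * (x - r₃) := by
  have hdisc := abraCubic_discr_nonneg L hω hε.1.le hωε.le
  refine ⟨by simp only [abraCubic, Cubic.discr] at hdisc; linarith, ?_⟩
  have ha : (abraCubic L ω ε).a ≠ 0 := by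
    simp only [abraCubic]
    exact mul_ne_zero four_ne_zero (pow_ne_zero 4 (sub_ne_zero.mpr hωε.ne))
  obtain ⟨r₁, r₂, r₃, hr⟩ := (abraCubic L ω ε).exists_eq_mul_prod_of_discr_nonneg ha hdisc
  exact ⟨r₁, r₂, r₃, fun x => by simp only [abraCubic] at hr; linear_combination hr x⟩

/-- The cubic `−8L³ + L²(−16ω + (1+4ε)²)x − 4L(ω−ε)²(1+4ε)x² + 4(ω−ε)⁴x³`
arising in the next-sample-size computation has nonnegative discriminant under
`L > 0`, `0 ≤ ω < ε < 1`, hence all three of its roots are real. -/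
theorem cubic_all_roots_real (L ω ε : ℝ) (hL : 0 < L) (hω : 0 ≤ ω)
    (hε : ε ∈ Set.Ioo (0 : ℝ) 1) (hωε : ω < ε) :
    0 ≤ 18 * (4 * (ω - ε) ^ 4) * (-4 * L * (ω - ε) ^ 2 * (1 + 4 * ε)) *
          (L ^ 2 * (-16 * ω + (1 + 4 * ε) ^ 2)) * (-8 * L ^ 3) -
        4 * (-4 * L * (ω - ε) ^ 2 * (1 + 4 * ε)) ^ 3 * (-8 * L ^ 3) +
        (-4 * L * (ω - ε) ^ 2 * (1 + 4 * ε)) ^ 2 *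
          (L ^ 2 * (-16 * ω + (1 + 4 * ε) ^ 2)) ^ 2 -
        4 * (4 * (ω - ε) ^ 4) * (L ^ 2 * (-16 * ω + (1 + 4 * ε) ^ 2)) ^ 3 -
        27 * (4 * (ω - ε) ^ 4) ^ 2 * (-8 * L ^ 3) ^ 2 ∧
    ∃ r₁ r₂ r₃ : ℝ, ∀ x : ℝ,
      4 * (ω - ε) ^ 4 * x ^ 3 - 4 * L * (ω - ε) ^ 2 * (1 + 4 * ε) * x ^ 2 +
          L ^ 2 * (-16 * ω + (1 + 4 * ε) ^ 2) * x - 8 * L ^ 3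
        = 4 * (ω - ε) ^ 4 * (x - r₁) * (x - r₂) * (x - r₃) :=
  cubic_all_roots_real_general L ω ε hω hε hωε
end
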